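/- arXiv:2204.03584 — 3 statements merged into one kernel-verified Lean document; each statement's English description precedes it below -/
import Mathlib

section
/- Let T : dom T ⊆ H → H be a linear operator in the complex Hilbert space H, let ω ∈ [0, π/2], and assume ⟨Tf, f⟩ ∈ Σ_ω for all f ∈ dom T with ‖f‖ = 1, and that for every μ ∈ ℂ \ Σ_ω the operator T − μ maps dom T onto H (these hold if T is m-sectorial with vertex 0, or m-accretive when ω = π/2). Then for every λ ∈ ℂ \ Σ_ω and every f ∈ dom T, one has m·‖Tf‖ ≤ ‖Tf − λf‖, where m := sin(|arg λ| − ω) if |arg λ| ∈ (ω, ω + π/2) and m := 1 if |arg λ| ∈ [ω + π/2, π]; equivalently, ‖T(T − λ)^{-1}‖ ≤ 1/m. -/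
open Real

noncomputable section

variable {H : Type*} [NormedAddCommGroup H] [InnerProductSpace ℂ H] [CompleteSpace H]

local notation "⟪" x ", " y "⟫" => @inner ℂ _ _ x y

/-- The closed sector `Σ_ω = {z ∈ ℂ : |arg z| ≤ ω}`. -/
def SigmaSector (ω : ℝ) : Set ℂ := {z : ℂ | |z.arg| ≤ ω}

/-! With `g = T f` and `z = ⟪f, T f⟫ ∈ Σ_ω` one has `⟪g, g - λ f⟫ = ‖g‖² - λ z̄`. A unimodular `μ`
with `Re μ ≥ m` rotates all of `λ · conj Σ_ω` into the closed left half-plane, so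
`m ‖g‖² ≤ Re (μ ⟪g, g - λ f⟫) ≤ ‖g‖ ‖g - λ f‖` by Cauchy–Schwarz. -/

open ComplexConjugate

def sectorResolventBound (ω : ℝ) (l : ℂ) : ℝ :=
  if |l.arg| < ω + π / 2 then Real.sin (|l.arg| - ω) else 1

lemma Complex.abs_arg_conj (z : ℂ) : |(conj z).arg| = |z.arg| := by
  rw [Complex.arg_conj]
  split_ifs with h
  · rw [h]
  · exact abs_neg _

lemma conj_mem_sigmaSector_iff {ω : ℝ} {z : ℂ} :
    conj z ∈ SigmaSector ω ↔ z ∈ SigmaSector ω := by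
  simp only [SigmaSector, Set.mem_ofPred_eq, Complex.abs_arg_conj]

lemma ofReal_mul_mem_sigmaSector_iff {ω r : ℝ} (hr : 0 < r) {z : ℂ} :
    (r : ℂ) * z ∈ SigmaSector ω ↔ z ∈ SigmaSector ω := by
  simp only [SigmaSector, Set.mem_ofPred_eq, Complex.arg_real_mul z hr]

lemma sectorResolventBound_conj (ω : ℝ) (l : ℂ) :
    sectorResolventBound ω (conj l) = sectorResolventBound ω l := by
  simp only [sectorResolventBound, Complex.abs_arg_conj]

lemma re_exp_mul_mul_conj (φ : ℝ) (l z : ℂ) :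
    (Complex.exp (φ * Complex.I) * l * conj z).re = ‖l‖ * ‖z‖ * Real.cos (φ + l.arg - z.arg) := by
  have hpolar : Complex.exp (φ * Complex.I) * l * conj z
      = ((‖l‖ * ‖z‖ : ℝ) : ℂ) * Complex.exp ((φ + l.arg - z.arg : ℝ) * Complex.I) := by
    conv_lhs => rw [← Complex.norm_mul_exp_arg_mul_I l, ← Complex.norm_mul_exp_arg_mul_I z]
    simp only [map_mul, Complex.conj_ofReal, ← Complex.exp_conj, Complex.conj_I]
    push_cast
    rw [sub_eq_add_neg, add_mul, add_mul, Complex.exp_add, Complex.exp_add]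
    ring_nf
  rw [hpolar, Complex.re_ofReal_mul, Complex.exp_ofReal_mul_I_re]

-- The argument of `μ l (conj z)` becomes `max (ω + π / 2) θ - arg z ∈ [π / 2, 3π / 2]`.
lemma exists_rotation_re_mul_conj_nonpos_of_arg_nonneg {ω : ℝ} (hω : ω ≤ π / 2) {l : ℂ}
    (hl : 0 ≤ l.arg) :
    ∃ μ : ℂ, ‖μ‖ = 1 ∧ sectorResolventBound ω l ≤ μ.re ∧
      ∀ z ∈ SigmaSector ω, (μ * l * conj z).re ≤ 0 := by
  set θ := l.arg
  have hθπ : θ ≤ π := Complex.arg_le_pi l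
  set φ := max (ω + π / 2) θ - θ
  refine ⟨Complex.exp (φ * Complex.I), Complex.norm_exp_ofReal_mul_I φ, ?_, ?_⟩
  · rw [Complex.exp_ofReal_mul_I_re, sectorResolventBound, abs_of_nonneg hl]
    split_ifs with h
    · have hφ : φ = π / 2 - (θ - ω) := by simp only [φ, max_eq_left h.le]; ring
      rw [hφ, Real.cos_pi_div_two_sub]
    · simp only [φ, max_eq_right (not_lt.mp h), sub_self, Real.cos_zero, le_refl]
  · intro z hz
    obtain ⟨hz₁, hz₂⟩ := abs_le.mp (show |z.arg| ≤ ω from hz)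
    rw [re_exp_mul_mul_conj]
    refine mul_nonpos_of_nonneg_of_nonpos (by positivity)
      (Real.cos_nonpos_of_pi_div_two_le_of_le ?_ ?_)
    · have := le_max_left (ω + π / 2) θ
      linarith
    · have := max_le (by linarith : ω + π / 2 ≤ π) hθπ
      linarith

lemma exists_rotation_re_mul_conj_nonpos {ω : ℝ} (hω : ω ≤ π / 2) (l : ℂ) :
    ∃ μ : ℂ, ‖μ‖ = 1 ∧ sectorResolventBound ω l ≤ μ.re ∧
      ∀ z ∈ SigmaSector ω, (μ * l * conj z).re ≤ 0 := by
  rcases le_or_gt 0 l.arg with hl | hl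
  · exact exists_rotation_re_mul_conj_nonpos_of_arg_nonneg hω hl
  · have hl' : 0 ≤ (conj l).arg := by
      rw [Complex.arg_conj, if_neg (by linarith [Complex.neg_pi_lt_arg l])]
      linarith
    obtain ⟨μ, hμ, hμre, hμz⟩ := exists_rotation_re_mul_conj_nonpos_of_arg_nonneg hω hl'
    refine ⟨conj μ, by rwa [Complex.norm_conj], ?_, fun z hz => ?_⟩
    · rwa [Complex.conj_re, ← sectorResolventBound_conj]
    · have := hμz (conj z) (conj_mem_sigmaSector_iff.mpr hz)
      rwa [← Complex.conj_re, map_mul, map_mul, Complex.conj_conj, Complex.conj_conj] at this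

section InnerProductSpace

variable {E : Type*} [NormedAddCommGroup E] [InnerProductSpace ℂ E]

lemma mul_norm_le_norm_sub_smul_of_re_nonpos {g f : E} {l μ : ℂ} {m : ℝ} (hμ : ‖μ‖ = 1)
    (hm : m ≤ μ.re) (hz : (μ * l * conj ⟪f, g⟫).re ≤ 0) : m * ‖g‖ ≤ ‖g - l • f‖ := by
  have hexp : ⟪g, g - l • f⟫ = ((‖g‖ ^ 2 : ℝ) : ℂ) - l * conj ⟪f, g⟫ := by
    rw [inner_sub_right, inner_smul_right, inner_conj_symm, inner_self_eq_norm_sq_to_K]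
    push_cast
    rfl
  have key : m * ‖g‖ * ‖g‖ ≤ ‖g - l • f‖ * ‖g‖ :=
    calc m * ‖g‖ * ‖g‖ ≤ μ.re * ‖g‖ ^ 2 - (μ * l * conj ⟪f, g⟫).re := by
          nlinarith [mul_le_mul_of_nonneg_right hm (sq_nonneg ‖g‖)]
      _ = (μ * ⟪g, g - l • f⟫).re := by
          rw [hexp, mul_sub, Complex.sub_re, ← mul_assoc, Complex.re_mul_ofReal]
      _ ≤ ‖μ * ⟪g, g - l • f⟫‖ := Complex.re_le_norm _
      _ = ‖⟪g, g - l • f⟫‖ := by rw [norm_mul, hμ, one_mul]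
      _ ≤ ‖g - l • f‖ * ‖g‖ := by rw [mul_comm]; exact norm_inner_le_norm _ _
  rcases (norm_nonneg g).eq_or_lt with hg | hg
  · rw [← hg, mul_zero]
    exact norm_nonneg _
  · exact le_of_mul_le_mul_right key hg

lemma inner_apply_mem_sigmaSector {T : E →ₗ.[ℂ] E} {ω : ℝ}
    (hW : ∀ f : T.domain, ‖(f : E)‖ = 1 → ⟪(f : E), T f⟫ ∈ SigmaSector ω)
    {f : T.domain} (hf : (f : E) ≠ 0) : ⟪(f : E), T f⟫ ∈ SigmaSector ω := by
  have hfpos : 0 < ‖(f : E)‖ := norm_pos_iff.mpr hf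
  set r := ‖(f : E)‖⁻¹
  have hunit : ‖(((r : ℂ) • f : T.domain) : E)‖ = 1 := by
    rw [Submodule.coe_smul, norm_smul, Complex.norm_real, Real.norm_of_nonneg (by positivity),
      inv_mul_cancel₀ hfpos.ne']
  have hscale : ⟪(((r : ℂ) • f : T.domain) : E), T ((r : ℂ) • f)⟫
      = ((r * r : ℝ) : ℂ) * ⟪(f : E), T f⟫ := by
    rw [T.map_smul, Submodule.coe_smul, inner_smul_left, inner_smul_right, Complex.conj_ofReal]
    push_cast
    ring
  have := hW ((r : ℂ) • f) hunit
  rwa [hscale, ofReal_mul_mem_sigmaSector_iff (by positivity)] at this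

end InnerProductSpace

theorem sectorial_resolvent_estimate_general
    (T : H →ₗ.[ℂ] H) (ω : ℝ) (hω1 : ω ≤ π / 2)
    (hW : ∀ f : T.domain, ‖(f : H)‖ = 1 → ⟪(f : H), T f⟫ ∈ SigmaSector ω)
    (l : ℂ) :
    ∀ f : T.domain,
      (if |l.arg| < ω + π / 2 then Real.sin (|l.arg| - ω) else 1) * ‖T f‖ ≤
        ‖T f - l • (f : H)‖ := by
  intro f
  obtain ⟨μ, hμ, hμre, hμz⟩ := exists_rotation_re_mul_conj_nonpos hω1 l
  refine mul_norm_le_norm_sub_smul_of_re_nonpos hμ hμre ?_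
  by_cases hf : (f : H) = 0
  · simp only [hf, inner_zero_left, map_zero, mul_zero, Complex.zero_re, le_refl]
  · exact hμz _ (inner_apply_mem_sigmaSector hW hf)

/-- Resolvent-type estimate for sectorial/accretive operators: if `W(T) ⊆ Σ_ω` and
`T − μ` is onto for every `μ ∉ Σ_ω` (as for m-sectorial operators with vertex `0`,
resp. m-accretive operators when `ω = π/2`), then for `λ ∉ Σ_ω` and `f ∈ dom T`,
`m · ‖Tf‖ ≤ ‖Tf − λf‖`, where `m = sin(|arg λ| − ω)` if `|arg λ| ∈ (ω, ω + π/2)` and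
`m = 1` if `|arg λ| ∈ [ω + π/2, π]`; equivalently `‖T(T − λ)⁻¹‖ ≤ 1/m`. -/
theorem sectorial_resolvent_estimate
    (T : H →ₗ.[ℂ] H) (ω : ℝ) (hω0 : 0 ≤ ω) (hω1 : ω ≤ π / 2)
    (hW : ∀ f : T.domain, ‖(f : H)‖ = 1 → ⟪(f : H), T f⟫ ∈ SigmaSector ω)
    (hsurj : ∀ μ : ℂ, μ ∉ SigmaSector ω → ∀ h : H, ∃ f : T.domain,
      T f - μ • (f : H) = h)
    (l : ℂ) (hl : l ∉ SigmaSector ω) :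
    ∀ f : T.domain,
      (if |l.arg| < ω + π / 2 then Real.sin (|l.arg| - ω) else 1) * ‖T f‖ ≤
        ‖T f - l • (f : H)‖ :=
  sectorial_resolvent_estimate_general T ω hω1 hW l

end
end

section
/- Assume the quadratic forms t₀ and a on 𝒟 satisfy t₀[f] ≥ κ₀‖f‖², a[f] ≥ α₀‖f‖², and a[f] ≤ C_p·(t₀[f] − κ‖f‖²)^p·(‖f‖²)^{1−p} for all f ∈ 𝒟, where κ₀ ≥ 0, α₀ ≥ 0, κ ≤ κ₀, p ∈ (0, 1), C_p > 0. If λ ∈ ℂ with Im λ ≠ 0 and f ∈ 𝒟 with ‖f‖ = 1 satisfy t₀[f] + 2λ·a[f] + λ² = 0, then Re λ = −a[f] ≤ −α₀, |λ|² = t₀[f] ≥ κ₀, and (Im λ)² ≥ max{0, C_p^{−1/p}·|Re λ|^{1/p} − |Re λ|² + κ}. In particular, W(t) \ ℝ ⊆ {z ∈ ℂ : Re z ≤ −α₀, |z| ≥ √κ₀, (Im z)² ≥ max{0, C_p^{−1/p}|Re z|^{1/p} − |Re z|² + κ}}. -/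
noncomputable section

/-!
Write `λ = x + iy`. The imaginary part of `t₀[f] + 2λa[f] + λ² = 0` is `2y(a[f] + x) = 0`, so
`y ≠ 0` forces `x = -a[f]`; the real part then reads `t₀[f] = x² + y² = |λ|²`. The lower bounds
on `a` and `t₀` give the first two enclosures, and raising the subordination inequality
`|x| = a[f] ≤ C_p (t₀[f] - κ)^p` to the power `1/p` gives `C_p^{-1/p}|x|^{1/p} ≤ |λ|² - κ`,
i.e. the bound on `y² = |λ|² - x²`.
-/

namespace Complex

theorem re_eq_neg_of_add_two_mul_add_sq_eq_zero {t a : ℝ} {l : ℂ} (him : l.im ≠ 0)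
    (h : (t : ℂ) + 2 * l * a + l ^ 2 = 0) : l.re = -a := by
  have h_im := congrArg Complex.im h
  simp only [add_im, mul_im, ofReal_re, ofReal_im, pow_two, re_ofNat, im_ofNat, zero_im,
    mul_zero, zero_mul, add_zero, zero_add] at h_im
  have : (a + l.re) * (2 * l.im) = 0 := by linarith
  rcases mul_eq_zero.mp this with h | h
  · linarith
  · exact absurd (by linarith) him

theorem sq_norm_eq_of_add_two_mul_add_sq_eq_zero {t a : ℝ} {l : ℂ} (him : l.im ≠ 0)
    (h : (t : ℂ) + 2 * l * a + l ^ 2 = 0) : ‖l‖ ^ 2 = t := by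
  have hre := re_eq_neg_of_add_two_mul_add_sq_eq_zero him h
  have h_re := congrArg Complex.re h
  simp only [add_re, mul_re, ofReal_re, ofReal_im, pow_two, re_ofNat, im_ofNat, zero_re,
    mul_zero, zero_mul, sub_zero] at h_re
  rw [Complex.sq_norm, normSq_apply, hre]
  rw [hre] at h_re
  linarith

end Complex

theorem Real.rpow_neg_inv_mul_rpow_inv_le_of_le_mul_rpow {a s C p : ℝ} (ha : 0 ≤ a)
    (hs : 0 ≤ s) (hC : 0 < C) (hp : 0 < p) (h : a ≤ C * s ^ p) :
    C ^ (-(1 / p)) * a ^ (1 / p) ≤ s := by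
  have hCinv : C ^ (-(1 / p)) * C ^ (1 / p) = 1 := by
    rw [← Real.rpow_add hC, neg_add_cancel, Real.rpow_zero]
  calc C ^ (-(1 / p)) * a ^ (1 / p)
      ≤ C ^ (-(1 / p)) * (C * s ^ p) ^ (1 / p) := by gcongr
    _ = C ^ (-(1 / p)) * C ^ (1 / p) * (s ^ p) ^ (1 / p) := by
        rw [Real.mul_rpow hC.le (Real.rpow_nonneg hs p), mul_assoc]
    _ = s := by rw [hCinv, one_mul, ← Real.rpow_mul hs, mul_one_div_cancel hp.ne', Real.rpow_one]

theorem im_sq_lower_bound_of_re_eq_neg {t a κ p C : ℝ} {l : ℂ} (hre : l.re = -a)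
    (hnorm : ‖l‖ ^ 2 = t) (ha : 0 ≤ a) (hκ : κ ≤ t) (hp : 0 < p) (hC : 0 < C)
    (hsub : a ≤ C * (t - κ) ^ p) :
    max 0 (C ^ (-(1 / p)) * |l.re| ^ (1 / p) - |l.re| ^ 2 + κ) ≤ l.im ^ 2 := by
  have habs : |l.re| = a := by rw [hre, abs_neg, abs_of_nonneg ha]
  have him : l.im ^ 2 = t - l.re ^ 2 := by
    rw [← hnorm, Complex.sq_norm, Complex.normSq_apply]; ring
  have hpow := Real.rpow_neg_inv_mul_rpow_inv_le_of_le_mul_rpow ha (sub_nonneg.mpr hκ) hC hp hsub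
  rw [habs]
  refine max_le (sq_nonneg _) ?_
  rw [him, hre, neg_sq]
  linarith

theorem pencil_nonreal_numRange_enclosure_general
    {H : Type*} [NormedAddCommGroup H] [InnerProductSpace ℂ H]
    (𝒟 : Submodule ℂ H) (t₀ a : 𝒟 → ℝ)
    (κ₀ α₀ κ p Cp : ℝ)
    (hα₀ : 0 ≤ α₀) (hκ : κ ≤ κ₀)
    (hp0 : 0 < p) (hCp : 0 < Cp)
    (ht₀ : ∀ f : 𝒟, κ₀ * ‖(f : H)‖ ^ 2 ≤ t₀ f)
    (ha : ∀ f : 𝒟, α₀ * ‖(f : H)‖ ^ 2 ≤ a f)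
    (hsub : ∀ f : 𝒟,
      a f ≤ Cp * (t₀ f - κ * ‖(f : H)‖ ^ 2) ^ p * (‖(f : H)‖ ^ 2) ^ (1 - p)) :
    (∀ l : ℂ, l.im ≠ 0 → ∀ f : 𝒟, ‖(f : H)‖ = 1 →
      (t₀ f : ℂ) + 2 * l * (a f : ℂ) + l ^ 2 = 0 →
      l.re = -(a f) ∧ l.re ≤ -α₀ ∧ ‖l‖ ^ 2 = t₀ f ∧
        κ₀ ≤ ‖l‖ ^ 2 ∧
        max 0 (Cp ^ (-(1 / p)) * |l.re| ^ (1 / p) - |l.re| ^ 2 + κ) ≤ l.im ^ 2) ∧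
    ({l : ℂ | l.im ≠ 0 ∧ ∃ f : 𝒟, ‖(f : H)‖ = 1 ∧
        (t₀ f : ℂ) + 2 * l * (a f : ℂ) + l ^ 2 = 0} ⊆
      {z : ℂ | z.re ≤ -α₀ ∧ Real.sqrt κ₀ ≤ ‖z‖ ∧
        max 0 (Cp ^ (-(1 / p)) * |z.re| ^ (1 / p) - |z.re| ^ 2 + κ) ≤ z.im ^ 2}) := by
  have pointwise : ∀ l : ℂ, l.im ≠ 0 → ∀ f : 𝒟, ‖(f : H)‖ = 1 →
      (t₀ f : ℂ) + 2 * l * (a f : ℂ) + l ^ 2 = 0 →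
      l.re = -(a f) ∧ l.re ≤ -α₀ ∧ ‖l‖ ^ 2 = t₀ f ∧ κ₀ ≤ ‖l‖ ^ 2 ∧
        max 0 (Cp ^ (-(1 / p)) * |l.re| ^ (1 / p) - |l.re| ^ 2 + κ) ≤ l.im ^ 2 := by
    intro l him f hf heq
    have htf : κ₀ ≤ t₀ f := by simpa [hf] using ht₀ f
    have haf : α₀ ≤ a f := by simpa [hf] using ha f
    have hsubf : a f ≤ Cp * (t₀ f - κ) ^ p := by simpa [hf] using hsub f
    have hre := Complex.re_eq_neg_of_add_two_mul_add_sq_eq_zero him heq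
    have hnorm := Complex.sq_norm_eq_of_add_two_mul_add_sq_eq_zero him heq
    exact ⟨hre, by linarith, hnorm, hnorm ▸ htf, im_sq_lower_bound_of_re_eq_neg hre hnorm
      (hα₀.trans haf) (hκ.trans htf) hp0 hCp hsubf⟩
  refine ⟨pointwise, ?_⟩
  rintro l ⟨him, f, hf, heq⟩
  obtain ⟨-, hre, -, hκ₀l, him_sq⟩ := pointwise l him f hf heq
  exact ⟨hre, Real.sqrt_le_iff.mpr ⟨norm_nonneg l, hκ₀l⟩, him_sq⟩

/-- Spectral enclosure for the non-real numerical range of the quadratic form pencil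
`t(λ) = t₀ + 2λa + λ²` under the `p`-subordination
`a[f] ≤ C_p (t₀[f] − κ‖f‖²)^p (‖f‖²)^{1−p}`: any non-real zero `λ` of `t(·)[f] = 0`
with `‖f‖ = 1` satisfies `Re λ = −a[f] ≤ −α₀`, `|λ|² = t₀[f] ≥ κ₀`, and
`(Im λ)² ≥ max{0, C_p^{−1/p}|Re λ|^{1/p} − |Re λ|² + κ}`; in particular
`W(t) \ ℝ` satisfies the corresponding enclosure. -/
theorem pencil_nonreal_numRange_enclosure
    {H : Type*} [NormedAddCommGroup H] [InnerProductSpace ℂ H]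
    (𝒟 : Submodule ℂ H) (t₀ a : 𝒟 → ℝ)
    (κ₀ α₀ κ p Cp : ℝ)
    (hκ₀ : 0 ≤ κ₀) (hα₀ : 0 ≤ α₀) (hκ : κ ≤ κ₀)
    (hp0 : 0 < p) (hp1 : p < 1) (hCp : 0 < Cp)
    (ht₀ : ∀ f : 𝒟, κ₀ * ‖(f : H)‖ ^ 2 ≤ t₀ f)
    (ha : ∀ f : 𝒟, α₀ * ‖(f : H)‖ ^ 2 ≤ a f)
    (hsub : ∀ f : 𝒟,
      a f ≤ Cp * (t₀ f - κ * ‖(f : H)‖ ^ 2) ^ p * (‖(f : H)‖ ^ 2) ^ (1 - p)) :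
    (∀ l : ℂ, l.im ≠ 0 → ∀ f : 𝒟, ‖(f : H)‖ = 1 →
      (t₀ f : ℂ) + 2 * l * (a f : ℂ) + l ^ 2 = 0 →
      l.re = -(a f) ∧ l.re ≤ -α₀ ∧ ‖l‖ ^ 2 = t₀ f ∧
        κ₀ ≤ ‖l‖ ^ 2 ∧
        max 0 (Cp ^ (-(1 / p)) * |l.re| ^ (1 / p) - |l.re| ^ 2 + κ) ≤ l.im ^ 2) ∧
    ({l : ℂ | l.im ≠ 0 ∧ ∃ f : 𝒟, ‖(f : H)‖ = 1 ∧
        (t₀ f : ℂ) + 2 * l * (a f : ℂ) + l ^ 2 = 0} ⊆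
      {z : ℂ | z.re ≤ -α₀ ∧ Real.sqrt κ₀ ≤ ‖z‖ ∧
        max 0 (Cp ^ (-(1 / p)) * |z.re| ^ (1 / p) - |z.re| ^ 2 + κ) ≤ z.im ^ 2}) :=
  pencil_nonreal_numRange_enclosure_general 𝒟 t₀ a κ₀ α₀ κ p Cp hα₀ hκ hp0 hCp ht₀ ha hsub

end
end

section
/- Assume the quadratic forms t₀ and a on 𝒟 satisfy t₀[f] ≥ κ₀‖f‖², a[f] ≥ 0, and a[f] ≤ C_p·(t₀[f])^p·(‖f‖²)^{1−p} for all f ∈ 𝒟, where κ₀ ≥ 0, p ∈ (0, 1/2], C_p > 0 (this is the subordination condition with κ = 0). Suppose that either (a) p < 1/2 and (C_p²)^{1/(1−2p)} < κ₀, or (b) p = 1/2, C_{1/2} < 1 and κ₀ > 0. Then W(t) ∩ ℝ = ∅: there exist no λ ∈ ℝ and f ∈ 𝒟 with ‖f‖ = 1 and t₀[f] + 2λ·a[f] + λ² = 0. -/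
noncomputable section

/-- Absence of real spectrum for the quadratic form pencil `t(λ) = t₀ + 2λa + λ²`
under the subordination `a[f] ≤ C_p (t₀[f])^p (‖f‖²)^{1−p}` (`κ = 0`): if either
`p < 1/2` and `(C_p²)^{1/(1−2p)} < κ₀`, or `p = 1/2`, `C_{1/2} < 1` and `κ₀ > 0`,
then `W(t) ∩ ℝ = ∅`, i.e. there are no real `λ` and unit `f ∈ 𝒟` with
`t₀[f] + 2λa[f] + λ² = 0`. -/
theorem pencil_real_numRange_empty
    {H : Type*} [NormedAddCommGroup H] [InnerProductSpace ℂ H]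
    (𝒟 : Submodule ℂ H) (t₀ a : 𝒟 → ℝ)
    (κ₀ p Cp : ℝ)
    (hκ₀ : 0 ≤ κ₀) (hp0 : 0 < p) (hp1 : p ≤ 1 / 2) (hCp : 0 < Cp)
    (ht₀ : ∀ f : 𝒟, κ₀ * ‖(f : H)‖ ^ 2 ≤ t₀ f)
    (ha0 : ∀ f : 𝒟, 0 ≤ a f)
    (hsub : ∀ f : 𝒟, a f ≤ Cp * (t₀ f) ^ p * (‖(f : H)‖ ^ 2) ^ (1 - p))
    (hcase : (p < 1 / 2 ∧ (Cp ^ 2) ^ (1 / (1 - 2 * p)) < κ₀) ∨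
      (p = 1 / 2 ∧ Cp < 1 ∧ 0 < κ₀)) :
    ∀ l : ℂ, l.im = 0 → ∀ f : 𝒟, ‖(f : H)‖ = 1 →
      (t₀ f : ℂ) + 2 * l * (a f : ℂ) + l ^ 2 ≠ 0 := by
  intro l hlim f hf heq
  -- κ₀ is positive in both cases
  have hκpos : 0 < κ₀ := by
    rcases hcase with ⟨_, h⟩ | ⟨_, _, h⟩
    · exact lt_of_le_of_lt (Real.rpow_nonneg (sq_nonneg Cp) _) h
    · exact h
  -- t₀ f is at least κ₀
  have ht : κ₀ ≤ t₀ f := by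
    have := ht₀ f
    rwa [hf, one_pow, mul_one] at this
  have htpos : 0 < t₀ f := lt_of_lt_of_le hκpos ht
  -- l is real, take real parts
  have hl : l = (l.re : ℂ) := Complex.ext rfl (by simp [hlim])
  set x := l.re with hx
  rw [hl] at heq
  have hre : t₀ f + 2 * x * a f + x ^ 2 = 0 := by exact_mod_cast heq
  -- discriminant condition: a f ^ 2 ≥ t₀ f
  have hdisc : t₀ f ≤ a f ^ 2 := by nlinarith [sq_nonneg (x + a f)]
  -- subordination with ‖f‖ = 1
  have hs : a f ≤ Cp * (t₀ f) ^ p := by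
    have := hsub f
    rwa [hf, one_pow, Real.one_rpow, mul_one] at this
  rcases hcase with ⟨hplt, hbound⟩ | ⟨hpe, hC1, _⟩
  · -- case p < 1/2
    have h2p : 0 < 1 - 2 * p := by linarith
    have hsq : a f ^ 2 ≤ Cp ^ 2 * (t₀ f) ^ (2 * p) := by
      have h1 : a f ^ 2 ≤ (Cp * (t₀ f) ^ p) ^ 2 :=
        pow_le_pow_left₀ (ha0 f) hs 2
      calc a f ^ 2 ≤ (Cp * (t₀ f) ^ p) ^ 2 := h1
        _ = Cp ^ 2 * ((t₀ f) ^ p) ^ 2 := by ring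
        _ = Cp ^ 2 * (t₀ f) ^ (2 * p) := by
            rw [← Real.rpow_natCast ((t₀ f) ^ p) 2, ← Real.rpow_mul htpos.le]
            norm_num [mul_comm]
    have hkey : (t₀ f) ^ (1 - 2 * p) ≤ Cp ^ 2 := by
      have h3 : t₀ f ≤ Cp ^ 2 * (t₀ f) ^ (2 * p) := le_trans hdisc hsq
      have h4 : (t₀ f) ^ (1 - 2 * p) = t₀ f / (t₀ f) ^ (2 * p) := by
        rw [Real.rpow_sub htpos, Real.rpow_one]
      rw [h4, div_le_iff₀ (Real.rpow_pos_of_pos htpos _)]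
      linarith
    have h5 : t₀ f ≤ (Cp ^ 2) ^ (1 / (1 - 2 * p)) := by
      have := Real.rpow_le_rpow (Real.rpow_nonneg htpos.le _) hkey
        (le_of_lt (by positivity : (0:ℝ) < 1 / (1 - 2 * p)))
      rwa [← Real.rpow_mul htpos.le, mul_one_div, div_self (ne_of_gt h2p),
        Real.rpow_one] at this
    linarith
  · -- case p = 1/2
    subst hpe
    have hsq : a f ^ 2 ≤ Cp ^ 2 * t₀ f := by
      have h1 : a f ^ 2 ≤ (Cp * (t₀ f) ^ ((1:ℝ)/2)) ^ 2 :=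
        pow_le_pow_left₀ (ha0 f) hs 2
      calc a f ^ 2 ≤ (Cp * (t₀ f) ^ ((1:ℝ)/2)) ^ 2 := h1
        _ = Cp ^ 2 * ((t₀ f) ^ ((1:ℝ)/2)) ^ 2 := by ring
        _ = Cp ^ 2 * t₀ f := by
            rw [← Real.rpow_natCast ((t₀ f) ^ ((1:ℝ)/2)) 2,
              ← Real.rpow_mul htpos.le]
            norm_num
    nlinarith [mul_pos (mul_pos (sub_pos.mpr hC1) (by linarith : (0:ℝ) < 1 + Cp)) htpos]

end
end
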